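/- arXiv:1606.00542 — 2 statements merged into one kernel-verified Lean document; each statement's English description precedes it below -/
import Mathlib

section
/- Let $d, \mathfrak{d} \in \mathrm{Sym}_n$ with $\mathfrak{d} \in \mathscr{R}$, and define $\mathfrak{a}_{d,\mathfrak{d}} = \sum_{\sigma} \mathrm{sgn}(\sigma)\,\varepsilon_{\mathfrak{d}}(\sigma d)$, the sum over $\sigma \in C_{\t_0}$ with $\sigma d \in R_{\t_0}\,\mathfrak{d}\,\mathrm{Sym}_{\alpha|\beta}$. If $\mathfrak{d}' = \tau\,\mathfrak{d}\,\xi_\alpha\,\xi_\beta^{+|\alpha|}$ and $d' = \sigma\, d\, \eta_\alpha\,\eta_\beta^{+|\alpha|}$ with $\tau \in R_{\t_0}$, $\sigma \in C_{\t_0}$, and $(\xi_\alpha,\xi_\beta),(\eta_\alpha,\eta_\beta) \in \mathrm{Sym}_\alpha \times \mathrm{Sym}_\beta$, then $\mathfrak{d}' \in \mathscr{R}$ and $\mathfrak{a}_{d',\mathfrak{d}'} = \mathrm{sgn}(\sigma)\,\mathrm{sgn}(\xi_\beta)\,\mathrm{sgn}(\eta_\beta)\,\mathfrak{a}_{d,\mathfrak{d}}$.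 -/
namespace SignedYoung
open Equiv Finset
open scoped Classical

abbrev Sym (n : ℕ) := Equiv.Perm (Fin n)

/-- Index of the block of the composition `γ` containing position `i` (0-based). -/
def blockOf (γ : List ℕ) (i : ℕ) : ℕ :=
  (List.range γ.length).countP (fun j => decide ((γ.take (j + 1)).sum ≤ i))

/-- The Young subgroup of `Sym n` associated to the composition `γ`. -/
def youngSubgroup (n : ℕ) (γ : List ℕ) : Subgroup (Sym n) where
  carrier := {σ | ∀ i : Fin n, blockOf γ (σ i) = blockOf γ i}
  one_mem' := by intro i; simp
  mul_mem' := by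
    intro a b ha hb i
    simp only [Equiv.Perm.mul_apply]
    rw [ha, hb]
  inv_mem' := by
    intro a ha i
    have h := ha (a⁻¹ i)
    rw [← Equiv.Perm.mul_apply, mul_inv_cancel, Equiv.Perm.one_apply] at h
    exact h.symm

/-- The subgroup `Sym_α` of the Young subgroup `Sym_{α|β}`: block-preserving permutations
fixing all points `≥ |α|`. -/
def symA (n : ℕ) (α β : List ℕ) : Set (Sym n) :=
  {σ | σ ∈ youngSubgroup n (α ++ β) ∧ ∀ i : Fin n, α.sum ≤ (i : ℕ) → σ i = i}

/-- The subgroup `Sym_β^{+|α|}`: block-preserving permutations fixing all points `< |α|`. -/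
def symB (n : ℕ) (α β : List ℕ) : Set (Sym n) :=
  {σ | σ ∈ youngSubgroup n (α ++ β) ∧ ∀ i : Fin n, (i : ℕ) < α.sum → σ i = i}

/-- Cells of the Young diagram of the composition `lam`. -/
abbrev Cell (lam : List ℕ) := (i : Fin lam.length) × Fin (lam.get i)

/-- A `lam`-tableau: a bijective labelling of the cells by `1, …, n` (here `Fin n`). -/
abbrev Tab (n : ℕ) (lam : List ℕ) := Cell lam ≃ Fin n

/-- The row stabilizer of a tableau. -/
def rowStab {n : ℕ} {lam : List ℕ} (t : Tab n lam) : Set (Sym n) :=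
  {σ | ∀ a : Fin n, (t.symm (σ a)).1 = (t.symm a).1}

/-- The column stabilizer of a tableau. -/
def colStab {n : ℕ} {lam : List ℕ} (t : Tab n lam) : Set (Sym n) :=
  {σ | ∀ a : Fin n, ((t.symm (σ a)).2 : ℕ) = ((t.symm a).2 : ℕ)}

/-- Colours `c_1 < c_2 < ⋯ < d_1 < d_2 < ⋯` (0-based). -/
abbrev Colour := Lex (ℕ ⊕ ℕ)

def cCol (k : ℕ) : Colour := toLex (Sum.inl k)

def dCol (k : ℕ) : Colour := toLex (Sum.inr k)

/-- `T` is a `lam`-tableau of type `(α|β)`: exactly `α_k` cells of colour `c_k` and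
`β_k` of colour `d_k`. -/
def HasType {lam : List ℕ} (α β : List ℕ) (T : Cell lam → Colour) : Prop :=
  (∀ k : ℕ, (Finset.univ.filter fun c => T c = cCol k).card = α.getD k 0) ∧
  (∀ k : ℕ, (Finset.univ.filter fun c => T c = dCol k).card = β.getD k 0)

/-- The colour of the number `i` under the canonical colouring by `(α|β)`. -/
def colourOfIdx (α β : List ℕ) (i : ℕ) : Colour :=
  if blockOf (α ++ β) i < α.length then cCol (blockOf (α ++ β) i)
  else dCol (blockOf (α ++ β) i - α.length)

/-- The canonical `lam`-tableau of type `(α|β)` associated to the tableau `t0`. -/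
def canonT {n : ℕ} {lam : List ℕ} (t0 : Tab n lam) (α β : List ℕ) : Cell lam → Colour :=
  fun c => colourOfIdx α β (t0 c)

/-- The action `σ · T = T ∘ t0⁻¹ ∘ σ⁻¹ ∘ t0` of `Sym n` on tableaux of type `(α|β)`,
through the fixed tableau `t0`. -/
def actT {n : ℕ} {lam : List ℕ} (t0 : Tab n lam) (σ : Sym n) (T : Cell lam → Colour) :
    Cell lam → Colour :=
  fun c => T (t0.symm (σ⁻¹ (t0 c)))

/-- `T_d = d · T_0`. -/
def TOf {n : ℕ} {lam : List ℕ} (t0 : Tab n lam) (α β : List ℕ) (d : Sym n) :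
    Cell lam → Colour :=
  actT t0 d (canonT t0 α β)

def RowSemistd {lam : List ℕ} (T : Cell lam → Colour) : Prop :=
  ∀ c c' : Cell lam, c.1 = c'.1 → (c.2 : ℕ) < (c'.2 : ℕ) → T c ≤ T c'

def ColSemistd {lam : List ℕ} (T : Cell lam → Colour) : Prop :=
  ∀ c c' : Cell lam, (c.2 : ℕ) = (c'.2 : ℕ) → c.1 < c'.1 → T c ≤ T c'

/-- Repeats in a row occur only for colours `c_k`. -/
def RowRepeatC {lam : List ℕ} (T : Cell lam → Colour) : Prop :=
  ∀ c c' : Cell lam, c.1 = c'.1 → (c.2 : ℕ) ≠ (c'.2 : ℕ) → T c = T c' → ∃ k, T c = cCol k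

/-- Repeats in a column occur only for colours `d_k`. -/
def ColRepeatD {lam : List ℕ} (T : Cell lam → Colour) : Prop :=
  ∀ c c' : Cell lam, (c.2 : ℕ) = (c'.2 : ℕ) → c.1 ≠ c'.1 → T c = T c' → ∃ k, T c = dCol k

def IsSemistd {lam : List ℕ} (T : Cell lam → Colour) : Prop :=
  RowSemistd T ∧ ColSemistd T ∧ RowRepeatC T ∧ ColRepeatD T

/-- A standard tableau: strictly increasing along rows and down columns. -/
def IsStd {n : ℕ} {lam : List ℕ} (t : Tab n lam) : Prop :=
  (∀ c c' : Cell lam, c.1 = c'.1 → (c.2 : ℕ) < (c'.2 : ℕ) → t c < t c') ∧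
  (∀ c c' : Cell lam, (c.2 : ℕ) = (c'.2 : ℕ) → c.1 < c'.1 → t c < t c')

def IsPartition (n : ℕ) (lam : List ℕ) : Prop :=
  lam.Pairwise (· ≥ ·) ∧ (∀ x ∈ lam, 0 < x) ∧ lam.sum = n

def IsBicomp (n : ℕ) (α β : List ℕ) : Prop :=
  (∀ x ∈ α, 0 < x) ∧ (∀ x ∈ β, 0 < x) ∧ α.sum + β.sum = n

/-- `𝒮 = {d : d⁻¹ R_{t0} d ∩ Sym_{α|β} ⊆ Sym_α}`. -/
def RSet {n : ℕ} {lam : List ℕ} (t0 : Tab n lam) (α β : List ℕ) : Set (Sym n) :=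
  {d | ∀ σ ∈ rowStab t0, d⁻¹ * σ * d ∈ youngSubgroup n (α ++ β) →
    d⁻¹ * σ * d ∈ symA n α β}

/-- `𝒞 = {d : d⁻¹ C_{t0} d ∩ Sym_{α|β} ⊆ Sym_β^{+|α|}}`. -/
def CSet {n : ℕ} {lam : List ℕ} (t0 : Tab n lam) (α β : List ℕ) : Set (Sym n) :=
  {d | ∀ σ ∈ colStab t0, d⁻¹ * σ * d ∈ youngSubgroup n (α ++ β) →
    d⁻¹ * σ * d ∈ symB n α β}

/-- The double coset `R_{t0} x Sym_{α|β}`. -/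
def dCoset {n : ℕ} {lam : List ℕ} (t0 : Tab n lam) (α β : List ℕ) (x : Sym n) :
    Set (Sym n) :=
  {ω | ∃ τ ∈ rowStab t0, ∃ ξ ∈ youngSubgroup n (α ++ β), ω = τ * x * ξ}

/-- The double coset `C_{t0} x Sym_{α|β}`. -/
def cCoset {n : ℕ} {lam : List ℕ} (t0 : Tab n lam) (α β : List ℕ) (x : Sym n) :
    Set (Sym n) :=
  {ω | ∃ σ ∈ colStab t0, ∃ ξ ∈ youngSubgroup n (α ++ β), ω = σ * x * ξ}

/-- `ε` is the sign function `ε_𝔡` on the double coset `R_{t0} 𝔡 Sym_{α|β}`: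
`ε(τ 𝔡 ξ_α ξ_β^{+|α|}) = sgn ξ_β`. -/
def IsEps {n : ℕ} {lam : List ℕ} (t0 : Tab n lam) (α β : List ℕ) (𝔡 : Sym n)
    (ε : Sym n → ℤ) : Prop :=
  ∀ τ ∈ rowStab t0, ∀ ξa ∈ symA n α β, ∀ ξb ∈ symB n α β,
    ε (τ * 𝔡 * (ξa * ξb)) = (Equiv.Perm.sign ξb : ℤ)

/-- The coefficient `𝔞_{d,𝔡} = ∑_{σ ∈ C_{t0}, σd ∈ R_{t0} 𝔡 Sym_{α|β}} sgn(σ) ε_𝔡(σ d)`. -/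
noncomputable def coeffA {n : ℕ} {lam : List ℕ} (t0 : Tab n lam) (α β : List ℕ)
    (ε : Sym n → ℤ) (d 𝔡 : Sym n) : ℤ :=
  ∑ σ : Sym n, if σ ∈ colStab t0 ∧ σ * d ∈ dCoset t0 α β 𝔡
    then (Equiv.Perm.sign σ : ℤ) * ε (σ * d) else 0

/-- The multiset of colours in column `j` of `T`. -/
def colMul {lam : List ℕ} (T : Cell lam → Colour) (j : ℕ) : Multiset Colour :=
  (Finset.univ.filter fun c : Cell lam => (c.2 : ℕ) = j).val.map T

noncomputable def sortedCol (m : Multiset Colour) : List Colour := m.sort (· ≤ ·)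

/-- Comparison of column multisets: the sorted lists agree up to position `k`, where
the first is larger. -/
def msGT (m m' : Multiset Colour) : Prop :=
  ∃ k, (∀ s, s < k → (sortedCol m).getD s (cCol 0) = (sortedCol m').getD s (cCol 0)) ∧
    (sortedCol m').getD k (cCol 0) < (sortedCol m).getD k (cCol 0)

/-- The strict column-dominance order `T ⊳ T'`. -/
def TabGT {lam : List ℕ} (T T' : Cell lam → Colour) : Prop :=
  ∃ t, (∀ j, j < t → colMul T j = colMul T' j) ∧ msGT (colMul T t) (colMul T' t)

/-- The column-dominance pre-order `T ⊵ T'`. -/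
def TabGE {lam : List ℕ} (T T' : Cell lam → Colour) : Prop :=
  (∀ j, colMul T j = colMul T' j) ∨ TabGT T T'

/-!
`Sym_{α|β}` is the internal direct product of `Sym_α` and `Sym_β^{+|α|}`, and `Sym_α` is
normal in it. Hence `ℛ` is a union of double cosets `R_{t0} 𝔡 Sym_{α|β}`, and on such a double
coset `ε_𝔡(ω η_α η_β) = sgn(η_β) ε_𝔡(ω)` and `ε_{τ 𝔡 ξ_α ξ_β} = sgn(ξ_β) ε_𝔡`. The three
changes `𝔡 ↦ 𝔡'`, `d ↦ d η_α η_β` and `d ↦ σ d` therefore multiply `𝔞` by `sgn ξ_β`,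
`sgn η_β` and (reindexing the sum over `C_{t0}` by `σ`) `sgn σ`.
-/

variable {n : ℕ} {α β : List ℕ}

lemma blockOf_append_lt_length_iff (i : ℕ) :
    blockOf (α ++ β) i < α.length ↔ i < α.sum := by
  have hmono {k l : ℕ} (h : k ≤ l) : ((α ++ β).take k).sum ≤ ((α ++ β).take l).sum :=
    List.monotone_sum_take _ h
  have hα : ((α ++ β).take α.length).sum = α.sum := by rw [List.take_left]
  unfold blockOf
  rw [List.length_append, List.range_add, List.countP_append]
  constructor
  · intro h
    by_contra! hi
    have hall : (List.range α.length).countP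
        (fun j => decide (((α ++ β).take (j + 1)).sum ≤ i)) = α.length := by
      rw [List.countP_eq_length.2, List.length_range]
      intro j hj
      have := hmono (show j + 1 ≤ α.length from List.mem_range.1 hj)
      simp only [decide_eq_true_eq]
      omega
    omega
  · intro hi
    have hpos : 0 < α.length := List.length_pos_of_ne_nil (by rintro rfl; simp at hi)
    have hβ : (List.map (α.length + ·) (List.range β.length)).countP
        (fun j => decide (((α ++ β).take (j + 1)).sum ≤ i)) = 0 := by
      refine List.countP_eq_zero.2 fun j hj => ?_
      obtain ⟨k, -, rfl⟩ := List.mem_map.1 hj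
      have := hmono (show α.length ≤ α.length + k + 1 by omega)
      simp only [decide_eq_true_eq]
      omega
    rw [hβ, Nat.add_zero]
    refine lt_of_lt_of_eq (List.countP_lt_length_iff.2 ⟨α.length - 1, ?_, ?_⟩) List.length_range
    · exact List.mem_range.2 (by omega)
    · simpa [Nat.sub_add_cancel hpos, hα] using hi

lemma lt_sum_iff_of_mem_youngSubgroup {g : Sym n} (hg : g ∈ youngSubgroup n (α ++ β))
    (i : Fin n) : (g i : ℕ) < α.sum ↔ (i : ℕ) < α.sum := by
  rw [← blockOf_append_lt_length_iff, ← blockOf_append_lt_length_iff, hg i]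

lemma symA_mul {a b : Sym n} (ha : a ∈ symA n α β) (hb : b ∈ symA n α β) :
    a * b ∈ symA n α β :=
  ⟨mul_mem ha.1 hb.1, fun i hi => by rw [Perm.mul_apply, hb.2 i hi, ha.2 i hi]⟩

lemma symA_inv {a : Sym n} (ha : a ∈ symA n α β) : a⁻¹ ∈ symA n α β :=
  ⟨inv_mem ha.1, fun i hi => Perm.inv_eq_iff_eq.2 (ha.2 i hi).symm⟩

lemma symB_mul {a b : Sym n} (ha : a ∈ symB n α β) (hb : b ∈ symB n α β) :
    a * b ∈ symB n α β :=
  ⟨mul_mem ha.1 hb.1, fun i hi => by rw [Perm.mul_apply, hb.2 i hi, ha.2 i hi]⟩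

lemma symB_inv {a : Sym n} (ha : a ∈ symB n α β) : a⁻¹ ∈ symB n α β :=
  ⟨inv_mem ha.1, fun i hi => Perm.inv_eq_iff_eq.2 (ha.2 i hi).symm⟩

lemma conj_mem_symA {a ξ : Sym n} (ha : a ∈ symA n α β)
    (hξ : ξ ∈ youngSubgroup n (α ++ β)) : ξ⁻¹ * a * ξ ∈ symA n α β := by
  refine ⟨mul_mem (mul_mem (inv_mem hξ) ha.1) hξ, fun i hi => ?_⟩
  have hξi : α.sum ≤ (ξ i : ℕ) := by
    simpa using (lt_sum_iff_of_mem_youngSubgroup hξ i).not.2 (by omega)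
  rw [Perm.mul_apply, Perm.mul_apply, ha.2 _ hξi, Perm.inv_eq_iff_eq]

lemma commute_of_mem_symA_of_mem_symB {a b : Sym n} (ha : a ∈ symA n α β)
    (hb : b ∈ symB n α β) : Commute a b := by
  ext i
  simp only [Perm.mul_apply]
  by_cases hi : (i : ℕ) < α.sum
  · rw [hb.2 i hi, hb.2 _ ((lt_sum_iff_of_mem_youngSubgroup ha.1 i).2 hi)]
  · have hbi : ¬ (b i : ℕ) < α.sum := (lt_sum_iff_of_mem_youngSubgroup hb.1 i).not.2 hi
    rw [ha.2 i (by omega), ha.2 _ (by omega)]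

lemma mul_mul_mul_comm_of_mem_symA_of_mem_symB {a b a' b' : Sym n} (ha' : a' ∈ symA n α β)
    (hb : b ∈ symB n α β) : a * b * (a' * b') = a * a' * (b * b') :=
  (commute_of_mem_symA_of_mem_symB ha' hb).symm.mul_mul_mul_comm a b'

/-- The `Sym_α`-factor of `g` is its restriction to the points `< |α|`. -/
lemma exists_symA_mul_symB {g : Sym n} (hg : g ∈ youngSubgroup n (α ++ β)) :
    ∃ a ∈ symA n α β, ∃ b ∈ symB n α β, a * b = g := by
  set a : Sym n := Perm.ofSubtype
    (g.subtypePerm (p := fun i : Fin n => (i : ℕ) < α.sum) (lt_sum_iff_of_mem_youngSubgroup hg))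
  have ha_lt {i : Fin n} (hi : (i : ℕ) < α.sum) : a i = g i :=
    Perm.ofSubtype_subtypePerm_of_mem _ hi
  have ha_ge {i : Fin n} (hi : α.sum ≤ (i : ℕ)) : a i = i :=
    Perm.ofSubtype_subtypePerm_of_not_mem _ (by omega)
  have haA : a ∈ symA n α β := by
    refine ⟨fun i => ?_, fun i => ha_ge⟩
    by_cases hi : (i : ℕ) < α.sum
    · rw [ha_lt hi]; exact hg i
    · rw [ha_ge (by omega)]
  refine ⟨a, haA, a⁻¹ * g, ⟨mul_mem (inv_mem haA.1) hg, fun i hi => ?_⟩, mul_inv_cancel_left a g⟩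
  rw [Perm.mul_apply, Perm.inv_eq_iff_eq, ha_lt hi]

section Tableau

variable {lam : List ℕ} {t0 : Tab n lam}

lemma rowStab_mul {a b : Sym n} (ha : a ∈ rowStab t0) (hb : b ∈ rowStab t0) :
    a * b ∈ rowStab t0 :=
  fun i => (ha (b i)).trans (hb i)

lemma rowStab_inv {a : Sym n} (ha : a ∈ rowStab t0) : a⁻¹ ∈ rowStab t0 := fun i => by
  have h := ha (a⁻¹ i)
  rw [Perm.inv_def, Equiv.apply_symm_apply] at h
  exact h.symm

lemma colStab_mul {a b : Sym n} (ha : a ∈ colStab t0) (hb : b ∈ colStab t0) :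
    a * b ∈ colStab t0 :=
  fun i => (ha (b i)).trans (hb i)

lemma colStab_inv {a : Sym n} (ha : a ∈ colStab t0) : a⁻¹ ∈ colStab t0 := fun i => by
  have h := ha (a⁻¹ i)
  rw [Perm.inv_def, Equiv.apply_symm_apply] at h
  exact h.symm

lemma dCoset_mul_mul {x τ ξ : Sym n} (hτ : τ ∈ rowStab t0)
    (hξ : ξ ∈ youngSubgroup n (α ++ β)) :
    dCoset t0 α β (τ * x * ξ) = dCoset t0 α β x := by
  ext ω
  constructor
  · rintro ⟨τ₁, hτ₁, ζ, hζ, rfl⟩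
    exact ⟨τ₁ * τ, rowStab_mul hτ₁ hτ, ξ * ζ, mul_mem hξ hζ, by group⟩
  · rintro ⟨τ₁, hτ₁, ζ, hζ, rfl⟩
    exact ⟨τ₁ * τ⁻¹, rowStab_mul hτ₁ (rowStab_inv hτ), ξ⁻¹ * ζ, mul_mem (inv_mem hξ) hζ,
      by group⟩

lemma mul_mem_dCoset_iff {x ω η : Sym n} (hη : η ∈ youngSubgroup n (α ++ β)) :
    ω * η ∈ dCoset t0 α β x ↔ ω ∈ dCoset t0 α β x := by
  constructor
  · rintro ⟨τ, hτ, ζ, hζ, heq⟩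
    exact ⟨τ, hτ, ζ * η⁻¹, mul_mem hζ (inv_mem hη), by rw [← mul_assoc, ← heq]; group⟩
  · rintro ⟨τ, hτ, ζ, hζ, rfl⟩
    exact ⟨τ, hτ, ζ * η, mul_mem hζ hη, by group⟩

lemma mul_mul_mem_RSet {d τ ξ : Sym n} (hd : d ∈ RSet t0 α β) (hτ : τ ∈ rowStab t0)
    (hξ : ξ ∈ youngSubgroup n (α ++ β)) : τ * d * ξ ∈ RSet t0 α β := by
  intro ρ hρ hy
  have hconj : (τ * d * ξ)⁻¹ * ρ * (τ * d * ξ) = ξ⁻¹ * (d⁻¹ * (τ⁻¹ * ρ * τ) * d) * ξ := by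
    group
  rw [hconj] at hy ⊢
  have hy' : d⁻¹ * (τ⁻¹ * ρ * τ) * d ∈ youngSubgroup n (α ++ β) := by
    rwa [Subgroup.mul_mem_cancel_right _ hξ, Subgroup.mul_mem_cancel_left _ (inv_mem hξ)] at hy
  exact conj_mem_symA (hd _ (rowStab_mul (rowStab_mul (rowStab_inv hτ) hρ) hτ) hy') hξ

variable {𝔡 : Sym n} {ε : Sym n → ℤ}

lemma IsEps.apply_mul (hε : IsEps t0 α β 𝔡 ε) {ω ηa ηb : Sym n}
    (hω : ω ∈ dCoset t0 α β 𝔡) (hηa : ηa ∈ symA n α β) (hηb : ηb ∈ symB n α β) :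
    ε (ω * (ηa * ηb)) = Perm.sign ηb * ε ω := by
  obtain ⟨τ, hτ, ζ, hζ, rfl⟩ := hω
  obtain ⟨ζa, hζa, ζb, hζb, rfl⟩ := exists_symA_mul_symB hζ
  rw [mul_assoc, mul_mul_mul_comm_of_mem_symA_of_mem_symB hηa hζb,
    hε τ hτ _ (symA_mul hζa hηa) _ (symB_mul hζb hηb), hε τ hτ ζa hζa ζb hζb,
    Perm.sign_mul, Units.val_mul, mul_comm]

lemma IsEps.apply_of_mul_mul {ε' : Sym n → ℤ} {τ ξa ξb ω : Sym n}
    (hε' : IsEps t0 α β (τ * 𝔡 * (ξa * ξb)) ε') (hε : IsEps t0 α β 𝔡 ε)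
    (hτ : τ ∈ rowStab t0) (hξa : ξa ∈ symA n α β) (hξb : ξb ∈ symB n α β)
    (hω : ω ∈ dCoset t0 α β 𝔡) : ε' ω = Perm.sign ξb * ε ω := by
  obtain ⟨τ₁, hτ₁, ζ, hζ, rfl⟩ := hω
  obtain ⟨ζa, hζa, ζb, hζb, rfl⟩ := exists_symA_mul_symB hζ
  have hξinv : (ξa * ξb)⁻¹ = ξa⁻¹ * ξb⁻¹ :=
    (commute_of_mem_symA_of_mem_symB hξa hξb).mul_inv
  have hω : τ₁ * 𝔡 * (ζa * ζb) =
      τ₁ * τ⁻¹ * (τ * 𝔡 * (ξa * ξb)) * ((ξa⁻¹ * ζa) * (ξb⁻¹ * ζb)) := by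
    rw [← mul_mul_mul_comm_of_mem_symA_of_mem_symB hζa (symB_inv hξb), ← hξinv]
    group
  rw [hε τ₁ hτ₁ ζa hζa ζb hζb, hω, hε' _ (rowStab_mul hτ₁ (rowStab_inv hτ)) _
    (symA_mul (symA_inv hξa) hζa) _ (symB_mul (symB_inv hξb) hζb), Perm.sign_mul, Perm.sign_inv,
    Units.val_mul]

lemma coeffA_mul_left {d σ : Sym n} (hσ : σ ∈ colStab t0) :
    coeffA t0 α β ε (σ * d) 𝔡 = Perm.sign σ * coeffA t0 α β ε d 𝔡 := by
  have hC (π : Sym n) : π * σ ∈ colStab t0 ↔ π ∈ colStab t0 :=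
    ⟨fun h => by simpa using colStab_mul h (colStab_inv hσ), fun h => colStab_mul h hσ⟩
  rw [coeffA, coeffA, Finset.mul_sum]
  refine Fintype.sum_equiv (Equiv.mulRight σ) _ _ fun π => ?_
  rw [Equiv.coe_mulRight, mul_assoc π σ d, hC, mul_ite, mul_zero, Perm.sign_mul, Units.val_mul]
  split_ifs
  · linear_combination (-(Perm.sign π * ε (π * (σ * d)))) * Int.units_coe_mul_self (Perm.sign σ)
  · simp

lemma coeffA_mul_right {d ηa ηb : Sym n} (hε : IsEps t0 α β 𝔡 ε)
    (hηa : ηa ∈ symA n α β) (hηb : ηb ∈ symB n α β) :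
    coeffA t0 α β ε (d * (ηa * ηb)) 𝔡 = Perm.sign ηb * coeffA t0 α β ε d 𝔡 := by
  rw [coeffA, coeffA, Finset.mul_sum]
  refine Fintype.sum_congr _ _ fun π => ?_
  rw [← mul_assoc, mul_mem_dCoset_iff (mul_mem hηa.1 hηb.1), mul_ite, mul_zero]
  split_ifs with h
  · rw [hε.apply_mul h.2 hηa hηb]
    ring
  · rfl

lemma coeffA_of_mul_mul {d τ ξa ξb : Sym n} {ε' : Sym n → ℤ}
    (hε' : IsEps t0 α β (τ * 𝔡 * (ξa * ξb)) ε') (hε : IsEps t0 α β 𝔡 ε)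
    (hτ : τ ∈ rowStab t0) (hξa : ξa ∈ symA n α β) (hξb : ξb ∈ symB n α β) :
    coeffA t0 α β ε' d (τ * 𝔡 * (ξa * ξb)) = Perm.sign ξb * coeffA t0 α β ε d 𝔡 := by
  rw [coeffA, coeffA, dCoset_mul_mul hτ (mul_mem hξa.1 hξb.1), Finset.mul_sum]
  refine Fintype.sum_congr _ _ fun π => ?_
  rw [mul_ite, mul_zero]
  split_ifs with h
  · rw [hε'.apply_of_mul_mul hε hτ hξa hξb h.2]
    ring
  · rfl

end Tableau

theorem coeffA_transform_general (n : ℕ) (lam : List ℕ) (α β : List ℕ) (t0 : Tab n lam)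
    (d 𝔡 d' 𝔡' : Sym n) (h𝔡 : 𝔡 ∈ RSet t0 α β)
    (ε ε' : Sym n → ℤ) (hε : IsEps t0 α β 𝔡 ε) (hε' : IsEps t0 α β 𝔡' ε')
    (τ : Sym n) (hτ : τ ∈ rowStab t0) (σ : Sym n) (hσ : σ ∈ colStab t0)
    (ξa : Sym n) (hξa : ξa ∈ symA n α β) (ξb : Sym n) (hξb : ξb ∈ symB n α β)
    (ηa : Sym n) (hηa : ηa ∈ symA n α β) (ηb : Sym n) (hηb : ηb ∈ symB n α β)
    (hd' : d' = σ * d * (ηa * ηb)) (h𝔡'eq : 𝔡' = τ * 𝔡 * (ξa * ξb)) :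
    𝔡' ∈ RSet t0 α β ∧
    coeffA t0 α β ε' d' 𝔡' =
      (Equiv.Perm.sign σ : ℤ) * (Equiv.Perm.sign ξb : ℤ) * (Equiv.Perm.sign ηb : ℤ) *
        coeffA t0 α β ε d 𝔡 := by
  subst hd' h𝔡'eq
  refine ⟨mul_mul_mem_RSet h𝔡 hτ (mul_mem hξa.1 hξb.1), ?_⟩
  rw [coeffA_of_mul_mul hε' hε hτ hξa hξb, coeffA_mul_right hε hηa hηb, coeffA_mul_left hσ]
  ring

/-- **Transformation of the coefficients `𝔞_{d,𝔡}` (Lemma 3.8(i)).** If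
`𝔡' = τ 𝔡 ξ_α ξ_β^{+|α|}` and `d' = σ d η_α η_β^{+|α|}` with `τ ∈ R_{t0}`, `σ ∈ C_{t0}`,
then `𝔡' ∈ ℛ` and `𝔞_{d',𝔡'} = sgn(σ) sgn(ξ_β) sgn(η_β) 𝔞_{d,𝔡}`. -/
theorem coeffA_transform (n : ℕ) (lam : List ℕ) (hl : IsPartition n lam)
    (α β : List ℕ) (hab : IsBicomp n α β) (t0 : Tab n lam)
    (d 𝔡 d' 𝔡' : Sym n) (h𝔡 : 𝔡 ∈ RSet t0 α β)
    (ε ε' : Sym n → ℤ) (hε : IsEps t0 α β 𝔡 ε) (hε' : IsEps t0 α β 𝔡' ε')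
    (τ : Sym n) (hτ : τ ∈ rowStab t0) (σ : Sym n) (hσ : σ ∈ colStab t0)
    (ξa : Sym n) (hξa : ξa ∈ symA n α β) (ξb : Sym n) (hξb : ξb ∈ symB n α β)
    (ηa : Sym n) (hηa : ηa ∈ symA n α β) (ηb : Sym n) (hηb : ηb ∈ symB n α β)
    (hd' : d' = σ * d * (ηa * ηb)) (h𝔡'eq : 𝔡' = τ * 𝔡 * (ξa * ξb)) :
    𝔡' ∈ RSet t0 α β ∧
    coeffA t0 α β ε' d' 𝔡' =
      (Equiv.Perm.sign σ : ℤ) * (Equiv.Perm.sign ξb : ℤ) * (Equiv.Perm.sign ηb : ℤ) *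
        coeffA t0 α β ε d 𝔡 :=
  coeffA_transform_general n lam α β t0 d 𝔡 d' 𝔡' h𝔡 ε ε' hε hε' τ hτ σ hσ ξa hξa ξb hξb ηa hηa ηb
    hηb hd' h𝔡'eq

end SignedYoung
end

section
/- Let $\mathrm{T}_d$ be a row semistandard $\lambda$-tableau of type $(\alpha|\beta)$ and suppose $d' \in R_{\t_0}\, d\, \mathrm{Sym}_{\alpha|\beta}$. Then either $\mathrm{T}_{d'} = \mathrm{T}_d$ or $\mathrm{T}_{d'} \rhd \mathrm{T}_d$ in the column-dominance order on tableaux of type $(\alpha|\beta)$. -/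
namespace SignedYoung
open Equiv Finset
open scoped Classical

/-!
Write `T_{d'} = T ∘ π` with `π` the row-preserving permutation of the cells induced by the
row-stabiliser factor of `d'` (the `Sym_{α|β}` factor does not change `T_d`). Scan the columns
from the left. If `T ∘ π` and `T` agree on all columns before `c`, then in the row of `c` the
cells carrying a colour `< T c` are the same for both tableaux (row semistandardness puts them
left of `c`), and `π` permutes that row, so counting gives `T c ≤ T (π c)`. Hence on the first
column where the colour multisets differ `T ∘ π` dominates `T` entrywise, so its sorted column
is lexicographically larger; on columns where the multisets agree entrywise domination forces
equality.
-/

section SortedCounting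

variable {α : Type*} [LinearOrder α]

theorem succ_le_countP_of_getElem_le {l : List α} (hl : l.SortedLE) {k : ℕ}
    (hk : k < l.length) {v : α} (hv : l[k] ≤ v) : k + 1 ≤ l.countP (· ≤ v) := by
  have hprefix : (l.take (k + 1)).countP (· ≤ v) = k + 1 := by
    rw [List.countP_eq_length.mpr, List.length_take, min_eq_left hk]
    intro a ha
    obtain ⟨i, hi, rfl⟩ := List.getElem_of_mem ha
    rw [List.getElem_take]
    simp only [List.length_take, lt_min_iff] at hi
    exact decide_eq_true
      ((List.sortedLE_iff_getElem_le_getElem_of_le.mp hl (Nat.lt_succ_iff.mp hi.1)).trans hv)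
  exact hprefix ▸ (List.take_sublist _ _).countP_le

theorem countP_le_of_lt_getElem {l : List α} (hl : l.SortedLE) {k : ℕ}
    (hk : k < l.length) {v : α} (hv : v < l[k]) : l.countP (· ≤ v) ≤ k := by
  have hsuffix : (l.drop k).countP (· ≤ v) = 0 := by
    rw [List.countP_eq_zero]
    intro a ha
    obtain ⟨i, hi, rfl⟩ := List.getElem_of_mem ha
    rw [List.getElem_drop]
    simpa using hv.trans_le (List.sortedLE_iff_getElem_le_getElem_of_le.mp hl
      (Nat.le_add_right k i))
  calc l.countP (· ≤ v) = (l.take k).countP (· ≤ v) + (l.drop k).countP (· ≤ v) := by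
        rw [← List.countP_append, List.take_append_drop]
    _ = (l.take k).countP (· ≤ v) := by rw [hsuffix, add_zero]
    _ ≤ (l.take k).length := List.countP_le_length
    _ ≤ k := List.length_take_le _ _

theorem card_filter_le_of_forall_le {ι : Type*} {s : Finset ι} {f g : ι → α}
    (h : ∀ i ∈ s, f i ≤ g i) (v : α) : #(s.filter (g · ≤ v)) ≤ #(s.filter (f · ≤ v)) :=
  card_le_card (monotone_filter_right s fun i hi hgv => (h i hi).trans hgv)

theorem eqOn_of_le_of_map_val_eq {ι : Type*} {s : Finset ι} {f g : ι → α}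
    (h : ∀ i ∈ s, f i ≤ g i) (heq : s.val.map f = s.val.map g) : Set.EqOn f g s := by
  intro i hi
  by_contra hne
  have hlt : f i < g i := (h i hi).lt_of_ne hne
  have hsub : s.filter (g · ≤ f i) ⊂ s.filter (f · ≤ f i) := by
    refine Finset.ssubset_iff_subset_ne.mpr ⟨?_, fun hs => ?_⟩
    · exact monotone_filter_right s fun j hj hgj => (h j hj).trans hgj
    · have : i ∈ s.filter (g · ≤ f i) := hs ▸ mem_filter.mpr ⟨hi, le_rfl⟩
      exact (mem_filter.mp this).2.not_gt hlt
  have hcount := congrArg (Multiset.countP (· ≤ f i)) heq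
  rw [Multiset.countP_map, Multiset.countP_map] at hcount
  exact (card_lt_card hsub).ne' hcount

end SortedCounting

theorem sortedLE_sortedCol (m : Multiset Colour) : (sortedCol m).SortedLE :=
  (Multiset.pairwise_sort m _).sortedLE

theorem msGT_of_countP_le {m m' : Multiset Colour}
    (hcard : Multiset.card m' = Multiset.card m)
    (hcount : ∀ v, m'.countP (· ≤ v) ≤ m.countP (· ≤ v)) (hne : m' ≠ m) : msGT m' m := by
  have hy : (sortedCol m' : Multiset Colour) = m' := Multiset.sort_eq _ _
  have hx : (sortedCol m : Multiset Colour) = m := Multiset.sort_eq _ _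
  set y := sortedCol m'
  set x := sortedCol m
  have hlen : y.length = x.length := by
    rw [← Multiset.coe_card, ← Multiset.coe_card, hy, hx, hcard]
  have hdiff : ∃ k, y.getD k (cCol 0) ≠ x.getD k (cCol 0) := by
    by_contra! hall
    refine hne (hy ▸ hx ▸ congrArg _ (List.ext_getElem hlen fun i hiy hix => ?_))
    simpa [List.getD_eq_getElem, hiy, hix] using hall i
  have hkx : Nat.find hdiff < x.length := by
    by_contra! hge
    exact Nat.find_spec hdiff (by
      rw [List.getD_eq_default _ _ hge, List.getD_eq_default _ _ (hlen ▸ hge)])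
  have hky : Nat.find hdiff < y.length := hlen ▸ hkx
  refine ⟨Nat.find hdiff, fun s hs => not_not.mp (Nat.find_min hdiff hs), ?_⟩
  have hne_k := Nat.find_spec hdiff
  rw [List.getD_eq_getElem _ _ hkx, List.getD_eq_getElem _ _ hky] at hne_k ⊢
  refine lt_of_le_of_ne (not_lt.mp fun hyx => ?_) hne_k.symm
  have hy_count : Nat.find hdiff + 1 ≤ m'.countP (· ≤ y[Nat.find hdiff]) := by
    rw [← hy, Multiset.coe_countP]
    exact succ_le_countP_of_getElem_le (sortedLE_sortedCol m') hky le_rfl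
  have hx_count : m.countP (· ≤ y[Nat.find hdiff]) ≤ Nat.find hdiff := by
    rw [← hx, Multiset.coe_countP]
    exact countP_le_of_lt_getElem (sortedLE_sortedCol m) hkx hyx
  have := hcount y[Nat.find hdiff]
  omega

section RowPreserving

variable {lam : List ℕ} {T : Cell lam → Colour} {π : Equiv.Perm (Cell lam)}

theorem cell_ext {c c' : Cell lam} (h1 : c.1 = c'.1) (h2 : (c.2 : ℕ) = (c'.2 : ℕ)) :
    c = c' := by
  obtain ⟨i, a⟩ := c
  obtain ⟨i', a'⟩ := c'
  cases h1
  simp_all [Fin.ext_iff]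

theorem le_apply_of_rowSemistd (hT : RowSemistd T) (hπ : ∀ c, (π c).1 = c.1) {c : Cell lam}
    (hagree : ∀ c' : Cell lam, (c'.2 : ℕ) < c.2 → T (π c') = T c') : T c ≤ T (π c) := by
  by_contra! hlt
  set below := univ.filter fun c' : Cell lam => c'.1 = c.1 ∧ T c' < T c
  have hcard : #below = #(univ.filter fun c' => c'.1 = c.1 ∧ T (π c') < T c) := by
    rw [← card_map π.symm.toEmbedding, map_filter, map_univ_equiv]
    simp only [Function.comp_def, Equiv.symm_symm, hπ]
  have hsub : below ⊂ univ.filter fun c' => c'.1 = c.1 ∧ T (π c') < T c := by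
    refine Finset.ssubset_iff_subset_ne.mpr ⟨fun c' hc' => ?_, fun heq => ?_⟩
    · obtain ⟨hrow, hval⟩ := (mem_filter.mp hc').2
      have hcol : (c'.2 : ℕ) < c.2 := by
        by_contra! hge
        rcases hge.lt_or_eq with hgt | heq
        · exact (hT c c' hrow.symm hgt).not_gt hval
        · exact hval.ne (congrArg T (cell_ext hrow heq.symm))
      exact mem_filter.mpr ⟨mem_univ _, hrow, hagree c' hcol ▸ hval⟩
    · have : c ∈ below := heq ▸ mem_filter.mpr ⟨mem_univ _, rfl, hlt⟩
      exact (mem_filter.mp this).2.2.false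
  exact (card_lt_card hsub).ne hcard

theorem apply_eq_of_colMul_eq (hT : RowSemistd T) (hπ : ∀ c, (π c).1 = c.1) {j : ℕ}
    (hcol : ∀ j' < j, colMul (T ∘ π) j' = colMul T j') (c : Cell lam) (hc : (c.2 : ℕ) < j) :
    T (π c) = T c := by
  induction j generalizing c with
  | zero => exact absurd hc (Nat.not_lt_zero _)
  | succ j ih =>
    have hagree : ∀ c' : Cell lam, (c'.2 : ℕ) < j → T (π c') = T c' :=
      ih fun j' hj' => hcol j' (hj'.trans (Nat.lt_succ_self j))
    rcases (Nat.lt_succ_iff.mp hc).lt_or_eq with hlt | rfl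
    · exact hagree c hlt
    · refine (eqOn_of_le_of_map_val_eq (fun c' hc' => ?_)
        (hcol _ (Nat.lt_succ_self _)).symm (mem_filter.mpr ⟨mem_univ c, rfl⟩)).symm
      exact le_apply_of_rowSemistd hT hπ fun c'' hc'' =>
        hagree c'' (hc''.trans_eq (mem_filter.mp hc').2)

theorem comp_eq_or_tabGT_of_rowSemistd (hT : RowSemistd T) (hπ : ∀ c, (π c).1 = c.1) :
    T ∘ π = T ∨ TabGT (T ∘ π) T := by
  by_cases hall : ∀ j, colMul (T ∘ π) j = colMul T j
  · exact .inl (funext fun c => apply_eq_of_colMul_eq hT hπ (fun j _ => hall j) c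
      (Nat.lt_succ_self _))
  push Not at hall
  have hfirst : ∀ j < Nat.find hall, colMul (T ∘ π) j = colMul T j :=
    fun j hj => not_not.mp (Nat.find_min hall hj)
  have hdom : ∀ c ∈ univ.filter fun c : Cell lam => (c.2 : ℕ) = Nat.find hall,
      T c ≤ (T ∘ π) c := fun c hc =>
    le_apply_of_rowSemistd hT hπ fun c' hc' => apply_eq_of_colMul_eq hT hπ hfirst c'
      (hc'.trans_eq (mem_filter.mp hc).2)
  refine .inr ⟨Nat.find hall, hfirst, msGT_of_countP_le ?_ (fun v => ?_) (Nat.find_spec hall)⟩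
  · simp only [colMul, Multiset.card_map]
  · simp only [colMul, Multiset.countP_map]
    exact card_filter_le_of_forall_le hdom v

end RowPreserving

section Action

variable {n : ℕ} {lam : List ℕ} (t0 : Tab n lam)

theorem actT_mul (σ ρ : Sym n) (T : Cell lam → Colour) :
    actT t0 (σ * ρ) T = actT t0 σ (actT t0 ρ T) := by
  funext c
  simp only [actT, mul_inv_rev, Perm.mul_apply, Equiv.apply_symm_apply]

theorem actT_canonT_of_mem_youngSubgroup {α β : List ℕ} {ξ : Sym n}
    (hξ : ξ ∈ youngSubgroup n (α ++ β)) : actT t0 ξ (canonT t0 α β) = canonT t0 α β := by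
  funext c
  have hblock : blockOf (α ++ β) (ξ⁻¹ (t0 c)) = blockOf (α ++ β) (t0 c) :=
    (youngSubgroup n (α ++ β)).inv_mem hξ (t0 c)
  simp only [actT, canonT, colourOfIdx, Equiv.apply_symm_apply, hblock]

theorem TOf_mul_of_mem_youngSubgroup {α β : List ℕ} (x : Sym n) {ξ : Sym n}
    (hξ : ξ ∈ youngSubgroup n (α ++ β)) : TOf t0 α β (x * ξ) = TOf t0 α β x := by
  rw [TOf, actT_mul, actT_canonT_of_mem_youngSubgroup t0 hξ, TOf]

theorem actT_eq_comp_permCongr (σ : Sym n) (T : Cell lam → Colour) :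
    actT t0 σ T = T ∘ t0.symm.permCongr σ⁻¹ :=
  rfl

theorem permCongr_apply_fst_of_mem_rowStab {τ : Sym n} (hτ : τ ∈ rowStab t0) (c : Cell lam) :
    (t0.symm.permCongr τ⁻¹ c).1 = c.1 := by
  simpa using (hτ (τ⁻¹ (t0 c))).symm

end Action

theorem row_semistandard_dominance_general (n : ℕ) (lam : List ℕ)
    (α β : List ℕ) (t0 : Tab n lam) (d d' : Sym n)
    (hrss : RowSemistd (TOf t0 α β d)) (hd' : d' ∈ dCoset t0 α β d) :
    TOf t0 α β d' = TOf t0 α β d ∨ TabGT (TOf t0 α β d') (TOf t0 α β d) := by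
  obtain ⟨τ, hτ, ξ, hξ, rfl⟩ := hd'
  rw [TOf_mul_of_mem_youngSubgroup t0 _ hξ, TOf, actT_mul, ← TOf, actT_eq_comp_permCongr]
  exact comp_eq_or_tabGT_of_rowSemistd hrss (permCongr_apply_fst_of_mem_rowStab t0 hτ)

/-- **Row semistandard and double cosets (Lemma 4.2(ii)).** If `T_d` is row semistandard
and `d' ∈ R_{t0} d Sym_{α|β}`, then either `T_{d'} = T_d` or `T_{d'} ⊳ T_d`. -/
theorem row_semistandard_dominance (n : ℕ) (lam : List ℕ) (hl : IsPartition n lam)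
    (α β : List ℕ) (hab : IsBicomp n α β) (t0 : Tab n lam) (d d' : Sym n)
    (hrss : RowSemistd (TOf t0 α β d)) (hd' : d' ∈ dCoset t0 α β d) :
    TOf t0 α β d' = TOf t0 α β d ∨ TabGT (TOf t0 α β d') (TOf t0 α β d) :=
  row_semistandard_dominance_general n lam α β t0 d d' hrss hd'

end SignedYoung
end
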